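/- Let g₁, …, g_n be elements of a group G lying in pairwise distinct conjugacy classes, each of finite order, ordered so that order(g_i) ≤ order(g_j) for i ≤ j. Then the matrix (tr_{g_j}(p_{g_i}))_{1 ≤ i,j ≤ n} is lower triangular with nonzero diagonal entries, where tr_h sums coefficients over the conjugacy class of h and p_g = (1/d)Σ_{k=1}^d g^k for d = order(g). In particular this matrix is invertible. -/

import Mathlib

/-- The averaging element `p_g = (1/d) · Σ_{k=1}^{d} g^k` in the rational group algebra. -/
noncomputable def pIdem {G : Type*} [Group G] (g : G) (d : ℕ) : MonoidAlgebra ℚ G :=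
  (d : ℚ)⁻¹ • ∑ k ∈ Finset.Icc 1 d, MonoidAlgebra.of ℚ G (g ^ k)

/-- `tr_g(Σ c_γ γ) = Σ_{γ ∈ C(g)} c_γ`: the sum of the coefficients over the
conjugacy class of `g`. -/
noncomputable def trConj {G : Type*} [Group G] (g : G) (a : MonoidAlgebra ℚ G) : ℚ :=
  ∑ᶠ γ ∈ {γ : G | IsConj g γ}, a.coeff γ


/-!
Every power of `g` has order dividing `orderOf g`, and conjugate elements have equal orders, so
`p_g` has no weight on a conjugacy class of elements whose order does not divide `orderOf g`;
with strictly increasing orders this kills the entries above the diagonal. On the diagonal,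
`p_g` has nonnegative coefficients and puts weight at least `1/d` on `g = g¹` itself.
-/

open Finset

section

variable {G : Type*} [Group G]

lemma pIdem_coeff [DecidableEq G] (g : G) (d : ℕ) (γ : G) :
    (pIdem g d).coeff γ = (d : ℚ)⁻¹ * #{k ∈ Icc 1 d | g ^ k = γ} := by
  simp [pIdem, MonoidAlgebra.coeff_sum, Finsupp.single_apply, sum_boole]

lemma pIdem_coeff_nonneg (g : G) (d : ℕ) (γ : G) : 0 ≤ (pIdem g d).coeff γ := by
  classical
  rw [pIdem_coeff]
  positivity

lemma pIdem_coeff_eq_zero {g γ : G} (d : ℕ) (h : ∀ k, g ^ k ≠ γ) : (pIdem g d).coeff γ = 0 := by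
  classical
  simp [pIdem_coeff, h]

lemma pIdem_coeff_self_pos {d : ℕ} (hd : 0 < d) (g : G) : 0 < (pIdem g d).coeff g := by
  classical
  have hone : 1 ∈ ({k ∈ Icc 1 d | g ^ k = g} : Finset ℕ) := by
    simpa [Nat.one_le_iff_ne_zero] using hd.ne'
  have hcard := card_pos.2 ⟨1, hone⟩
  rw [pIdem_coeff]
  positivity

lemma trConj_eq_zero {h : G} {a : MonoidAlgebra ℚ G} (ha : ∀ γ, IsConj h γ → a.coeff γ = 0) :
    trConj h a = 0 :=
  finsum_mem_of_eqOn_zero ha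

lemma coeff_le_trConj {h γ : G} {a : MonoidAlgebra ℚ G} (ha : ∀ x, 0 ≤ a.coeff x)
    (hγ : IsConj h γ) : a.coeff γ ≤ trConj h a := by
  rw [trConj, finsum_mem_def]
  calc a.coeff γ = {γ | IsConj h γ}.indicator a.coeff γ :=
        (Set.indicator_of_mem (s := {γ | IsConj h γ}) hγ _).symm
    _ ≤ _ := single_le_finsum γ
        (a.coeff.hasFiniteSupport.subset (Set.support_indicator.trans_subset Set.inter_subset_right))
        fun x => Set.indicator_nonneg (fun x _ => ha x) x

lemma trConj_pIdem_eq_zero_of_not_dvd {g h : G} (d : ℕ) (hgh : ¬orderOf h ∣ orderOf g) :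
    trConj h (pIdem g d) = 0 :=
  trConj_eq_zero fun _ ⟨_, hc⟩ => pIdem_coeff_eq_zero d fun k hk =>
    hgh (hc.orderOf_eq ▸ hk ▸ orderOf_pow_dvd k)

lemma trConj_pIdem_self_pos {d : ℕ} (hd : 0 < d) (g : G) : 0 < trConj g (pIdem g d) :=
  (pIdem_coeff_self_pos hd g).trans_le (coeff_le_trConj (pIdem_coeff_nonneg g d) (.refl g))

end

theorem stmt_16_general {G : Type*} [Group G] (n : ℕ) (g : Fin n → G) (d : Fin n → ℕ)
    (hpos : ∀ i, 0 < d i) (hord : ∀ i, orderOf (g i) = d i)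
    (hmono : StrictMono d) :
    (∀ i j, i < j →
      (Matrix.of fun i j : Fin n => trConj (g j) (pIdem (g i) (d i))) i j = 0) ∧
    (∀ i, (Matrix.of fun i j : Fin n => trConj (g j) (pIdem (g i) (d i))) i i ≠ 0) ∧
    IsUnit (Matrix.of fun i j : Fin n => trConj (g j) (pIdem (g i) (d i))) := by
  set M := Matrix.of fun i j : Fin n => trConj (g j) (pIdem (g i) (d i))
  have hupper : ∀ i j, i < j → M i j = 0 := fun i j hij =>
    trConj_pIdem_eq_zero_of_not_dvd _ <| by
      rw [hord, hord]
      exact Nat.not_dvd_of_pos_of_lt (hpos i) (hmono hij)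
  have hdiag : ∀ i, M i i ≠ 0 := fun i => (trConj_pIdem_self_pos (hpos i) (g i)).ne'
  refine ⟨hupper, hdiag, ?_⟩
  rw [Matrix.isUnit_iff_isUnit_det, Matrix.det_of_isLowerTriangular M fun i j h => hupper i j h,
    isUnit_iff_ne_zero]
  exact prod_ne_zero_iff.2 fun i _ => hdiag i

/-- For `g₁, …, g_n` in pairwise distinct conjugacy classes with strictly increasing
finite orders, the matrix `(tr_{g_j}(p_{g_i}))` is lower triangular with nonzero
diagonal entries; in particular it is invertible. -/
theorem stmt_16 {G : Type*} [Group G] (n : ℕ) (g : Fin n → G) (d : Fin n → ℕ)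
    (hpos : ∀ i, 0 < d i) (hord : ∀ i, orderOf (g i) = d i)
    (hconj : ∀ i j, i ≠ j → ¬ IsConj (g i) (g j))
    (hmono : StrictMono d) :
    (∀ i j, i < j →
      (Matrix.of fun i j : Fin n => trConj (g j) (pIdem (g i) (d i))) i j = 0) ∧
    (∀ i, (Matrix.of fun i j : Fin n => trConj (g j) (pIdem (g i) (d i))) i i ≠ 0) ∧
    IsUnit (Matrix.of fun i j : Fin n => trConj (g j) (pIdem (g i) (d i))) :=
  stmt_16_general n g d hpos hord hmono
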